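/- Under the hypotheses of the previous lemma (D normalized multiplicity-free, D_{j₁} = {d₁ < ... < d_k} nonempty, D_{j₂} in a later region with first crossing in row i₂ > d_{k-1} and D_{j₂} ≠ [i₂-1]): if i₂ < d_k - 1 then D_{j₂} = [i₂ - 1] ∪ {d_k}, and if i₂ = d_k - 1 then [i₂ - 1] ∪ {d_k} ⊆ D_{j₂}. -/
import Mathlib


/-- Whether the box/crossing status of position `(i, j)` of the diagram `D` matches a
pattern cell: `none` (`*`) imposes no restriction, `some true` (`□`) requires a box,
`some false` (`×`) requires a crossing (absence of a box). -/
def cellOK (D : ℕ → Finset ℕ) (j i : ℕ) : Option Bool → Prop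
  | none => True
  | some b => (i ∈ D j ↔ b = true)

/-- Multiplicitous configuration (A): rows (top to bottom) `(×,×), (□,×), (*,□), (*,*)`. -/
def patA : Fin 4 → Option Bool × Option Bool :=
  ![(some false, some false), (some true, some false), (none, some true), (none, none)]

/-- Multiplicitous configuration (B): rows `(×,□), (×,×), (□,□), (□,*)`. -/
def patB : Fin 4 → Option Bool × Option Bool :=
  ![(some false, some true), (some false, some false), (some true, some true),
    (some true, none)]

/-- Multiplicitous configuration (C): rows `(×,×), (×,×), (□,□), (□,*)`. -/
def patC : Fin 4 → Option Bool × Option Bool :=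
  ![(some false, some false), (some false, some false), (some true, some true),
    (some true, none)]

/-- Multiplicitous configuration (D): rows `(×,□), (□,×), (□,□), (*,*)`. -/
def patD : Fin 4 → Option Bool × Option Bool :=
  ![(some false, some true), (some true, some false), (some true, some true), (none, none)]

/-- Multiplicitous configuration (E): rows `(×,□), (□,×), (□,×), (×,□)`. -/
def patE : Fin 4 → Option Bool × Option Bool :=
  ![(some false, some true), (some true, some false), (some true, some false),
    (some false, some true)]

/-- Multiplicitous configuration (F): rows `(□,×), (×,□), (□,×), (×,□)`. -/
def patF : Fin 4 → Option Bool × Option Bool :=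
  ![(some true, some false), (some false, some true), (some true, some false),
    (some false, some true)]

/-- A diagram (with columns indexed by `[n]`, rows embedded in an arbitrarily large grid)
is multiplicitous if some choice of rows `i₁ < i₂ < i₃ < i₄` and distinct columns
`j₁ ≠ j₂` of `[n]` realizes one of the six configurations (A)–(F) (allowing `j₁ > j₂`
accounts for the column swaps). -/
def Multiplicitous (n : ℕ) (D : ℕ → Finset ℕ) : Prop :=
  ∃ p ∈ [patA, patB, patC, patD, patE, patF], ∃ i : Fin 4 → ℕ, ∃ j₁ j₂ : ℕ,
    (∀ r, 1 ≤ i r) ∧ StrictMono i ∧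
    j₁ ∈ Finset.Icc 1 n ∧ j₂ ∈ Finset.Icc 1 n ∧ j₁ ≠ j₂ ∧
    ∀ r, cellOK D j₁ (i r) (p r).1 ∧ cellOK D j₂ (i r) (p r).2

/-- A diagram is multiplicity-free if it is not multiplicitous. -/
def MultFree (n : ℕ) (D : ℕ → Finset ℕ) : Prop := ¬ Multiplicitous n D

/-- The increasing list of crossings of column `j` within `[n]`, padded with the
sentinel `n + 1` playing the role of `∞`. -/
def colList (n : ℕ) (D : ℕ → Finset ℕ) (j : ℕ) : List ℕ :=
  ((Finset.Icc 1 n \ D j).sort (· ≤ ·)) ++ [n + 1]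

/-- A diagram is normalized if its columns are arranged weakly increasingly, from left to
right, in the lexicographic order of their padded crossing lists. -/
def Normalized (n : ℕ) (D : ℕ → Finset ℕ) : Prop :=
  ∀ j₁ j₂ : ℕ, 1 ≤ j₁ → j₁ ≤ j₂ → j₂ ≤ n →
    colList n D j₁ = colList n D j₂ ∨ List.Lex (· < ·) (colList n D j₁) (colList n D j₂)

/-- `i` is the row of the first (topmost) crossing of column `j`. -/
def FirstCross (D : ℕ → Finset ℕ) (j i : ℕ) : Prop :=
  1 ≤ i ∧ i ∉ D j ∧ ∀ i', 1 ≤ i' → i' < i → i' ∈ D j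

/-- `i₂` is the row of the second crossing of column `j`, given that `i₁` is the row of
the first crossing. -/
def SecondCross (D : ℕ → Finset ℕ) (j i₁ i₂ : ℕ) : Prop :=
  i₁ < i₂ ∧ i₂ ∉ D j ∧ ∀ i', i₁ < i' → i' < i₂ → i' ∈ D j


private lemma sm4 {a b c d : ℕ} (h1 : a < b) (h2 : b < c) (h3 : c < d) :
    StrictMono ![a, b, c, d] := by
  intro x y hxy
  fin_cases x <;> fin_cases y <;> simp_all <;> omega

/-- Under the hypotheses of Lemma "lower than second last" (so `i₂ > d_{k-1}`, where
`d_k = max D_{j₁}`): if `i₂ < d_k - 1` then `D_{j₂} = [i₂-1] ∪ {d_k}`, and if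
`i₂ = d_k - 1` then `[i₂-1] ∪ {d_k} ⊆ D_{j₂}`. -/
theorem later_column_structure (n : ℕ) (D : ℕ → Finset ℕ)
    (hsub : ∀ j, D j ⊆ Finset.Icc 1 n)
    (hMF : MultFree n D) (hN : Normalized n D)
    (j₁ j₂ i₁ i₂ : ℕ) (hj₁ : 1 ≤ j₁) (hjj : j₁ < j₂) (hj₂ : j₂ ≤ n)
    (hne : (D j₁).Nonempty)
    (hf₁ : FirstCross D j₁ i₁) (hf₂ : FirstCross D j₂ i₂) (h12 : i₁ < i₂)
    (hD₂ : D j₂ ≠ Finset.Icc 1 (i₂ - 1))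
    (hgt : ((D j₁).erase ((D j₁).max' hne)).sup id < i₂) :
    (i₂ < (D j₁).max' hne - 1 →
        D j₂ = insert ((D j₁).max' hne) (Finset.Icc 1 (i₂ - 1))) ∧
    (i₂ = (D j₁).max' hne - 1 →
        insert ((D j₁).max' hne) (Finset.Icc 1 (i₂ - 1)) ⊆ D j₂) := by
  classical
  set M := (D j₁).max' hne with hM
  have hMj₁ : M ∈ D j₁ := (D j₁).max'_mem hne
  have hMn := Finset.mem_Icc.mp (hsub j₁ hMj₁)
  have hdlt : ∀ x ∈ D j₁, x ≠ M → x < i₂ := by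
    intro x hx hxM
    have hx' : x ∈ (D j₁).erase M := Finset.mem_erase.mpr ⟨hxM, hx⟩
    have := Finset.le_sup (f := id) hx'
    simp only [id] at this
    omega
  have hIcc : Finset.Icc 1 (i₂ - 1) ⊆ D j₂ := by
    intro x hx
    rw [Finset.mem_Icc] at hx
    exact hf₂.2.2 x hx.1 (by omega)
  have hi₂1 : 1 ≤ i₂ := hf₂.1
  have hi₂D₂ : i₂ ∉ D j₂ := hf₂.2.1
  have hj₂1 : 1 ≤ j₂ := by omega
  have hj₁n : j₁ ≤ n := by omega
  have hj₂n : j₂ ∈ Finset.Icc 1 n := Finset.mem_Icc.mpr ⟨hj₂1, hj₂⟩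
  have hj₁n' : j₁ ∈ Finset.Icc 1 n := Finset.mem_Icc.mpr ⟨hj₁, hj₁n⟩
  have hi₂D₁ : i₂ < M → i₂ ∉ D j₁ := by
    intro hiM h
    have := hdlt i₂ h (by omega)
    omega
  -- no boxes of column j₂ strictly between i₂ and M
  have K1 : ∀ r, i₂ < r → r < M → r ∉ D j₂ := by
    intro r hir hrM hrD
    have h1 : i₂ ∉ D j₁ := hi₂D₁ (by omega)
    have h2 : r ∉ D j₁ := fun h => by have := hdlt r h (by omega); omega
    refine hMF ⟨patA, by simp, ![i₂, r, M, M + 1], j₂, j₁, ?_, sm4 hir hrM (by omega),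
      hj₂n, hj₁n', (by omega), ?_⟩
    · intro s; fin_cases s <;> simp <;> omega
    · intro s; fin_cases s <;> simp [cellOK, patA] <;> tauto
  have exr : ∃ r ∈ D j₂, i₂ < r := by
    have hns : ¬ D j₂ ⊆ Finset.Icc 1 (i₂ - 1) := fun h =>
      hD₂ (Finset.Subset.antisymm h hIcc)
    obtain ⟨r, hrD, hrI⟩ := Finset.not_subset.mp hns
    have hr1 := Finset.mem_Icc.mp (hsub j₂ hrD)
    rw [Finset.mem_Icc] at hrI
    refine ⟨r, hrD, ?_⟩
    have : r ≠ i₂ := fun h => hi₂D₂ (h ▸ hrD)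
    omega
  have K2 : i₂ < M → M ∈ D j₂ := by
    intro hiM
    by_contra hMD
    obtain ⟨r, hrD, hir⟩ := exr
    have hrM : r ≠ M := fun h => hMD (h ▸ hrD)
    rcases lt_or_gt_of_ne hrM with h | h
    · exact K1 r hir h hrD
    · have h1 : i₂ ∉ D j₁ := hi₂D₁ hiM
      have h2 : r ∉ D j₁ := fun hh => by have := hdlt r hh (by omega); omega
      refine hMF ⟨patA, by simp, ![i₂, M, r, r + 1], j₁, j₂, ?_, sm4 hiM h (by omega),
        hj₁n', hj₂n, (by omega), ?_⟩
      · intro s; fin_cases s <;> simp <;> omega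
      · intro s; fin_cases s <;> simp [cellOK, patA] <;> tauto
  have K3 : i₂ + 1 < M → ∀ r, M < r → r ∉ D j₂ := by
    intro h2 r hMr hrD
    have hM2 : M ∈ D j₂ := K2 (by omega)
    have ha : i₂ + 1 ∉ D j₂ := K1 _ (by omega) h2
    have hb : i₂ ∉ D j₁ := hi₂D₁ (by omega)
    have hc : i₂ + 1 ∉ D j₁ := fun hh => by have := hdlt _ hh (by omega); omega
    refine hMF ⟨patC, by simp, ![i₂, i₂ + 1, M, r], j₂, j₁, ?_,
      sm4 (by omega) h2 hMr, hj₂n, hj₁n', (by omega), ?_⟩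
    · intro s; fin_cases s <;> simp <;> omega
    · intro s; fin_cases s <;> simp [cellOK, patC] <;> tauto
  constructor
  · intro hlt
    have hM2 : M ∈ D j₂ := K2 (by omega)
    apply Finset.Subset.antisymm
    · intro x hx
      have hx1 := Finset.mem_Icc.mp (hsub j₂ hx)
      rw [Finset.mem_insert, Finset.mem_Icc]
      by_contra hcon
      push_neg at hcon
      obtain ⟨hxM, hxI⟩ := hcon
      have hxi : i₂ < x := by
        have : x ≠ i₂ := fun h => hi₂D₂ (h ▸ hx)
        omega
      rcases lt_or_gt_of_ne hxM with h | h
      · exact K1 x hxi h hx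
      · exact K3 (by omega) x h hx
    · intro x hx
      rcases Finset.mem_insert.mp hx with h | h
      · exact h ▸ hM2
      · exact hIcc h
  · intro heq
    have hM2 : M ∈ D j₂ := K2 (by omega)
    intro x hx
    rcases Finset.mem_insert.mp hx with h | h
    · exact h ▸ hM2
    · exact hIcc h
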